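/- Let G be a group and C ⊆ G a normal cone whose induced relation ≥ is a partial order. Let f be a dominant, h ∈ G, and set g = hfh⁻¹. Then γ(f,g) = γ(g,f) = 1. (In particular, the pseudo-distance κ(f,g) = max(log γ(f,g), log γ(g,f)) vanishes on conjugacy classes of dominants.) -/

import Mathlib

open Filter

/-- A subset `C` of a group is a *normal cone* if it contains `1`, is closed under
multiplication, and is invariant under conjugation. -/
def IsNormalCone {G : Type*} [Group G] (C : Set G) : Prop :=
  (1 : G) ∈ C ∧ (∀ f g : G, f ∈ C → g ∈ C → f * g ∈ C) ∧
    (∀ f h : G, f ∈ C → h * f * h⁻¹ ∈ C)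

/-- The relation `f ≥ g` induced by the cone `C`: `f * g⁻¹ ∈ C`. -/
def ConeGe {G : Type*} [Group G] (C : Set G) (f g : G) : Prop := f * g⁻¹ ∈ C

/-- `f` is a *dominant*: it lies in the cone, is not `1`, and some power of `f`
dominates any given element. -/
def IsDominant {G : Type*} [Group G] (C : Set G) (f : G) : Prop :=
  f ∈ C ∧ f ≠ 1 ∧ ∀ g : G, ∃ p : ℕ, ConeGe C (f ^ p) g

/-- `γ_k(f,g) = inf { p ∈ ℤ | f^p ≥ g^k }`. -/
noncomputable def gammaK {G : Type*} [Group G] (C : Set G) (f g : G) (k : ℕ) : ℤ :=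
  sInf {p : ℤ | ConeGe C (f ^ p) (g ^ k)}

/-!
A normal cone makes `≥` a bi-invariant preorder. If `f ^ a ≥ h⁻¹` and `f ^ b ≥ h`, multiplying
these inequalities gives `f ^ (k + a + b) = f ^ b * f ^ k * f ^ a ≥ h * f ^ k * h⁻¹ = g ^ k` and
likewise `g ^ (k + a + b) ≥ f ^ k` for every integer `k`. Antisymmetry forbids negative powers of
a dominant from lying in the cone, so these two inequalities pin `γ_k(f, g)` and `γ_k(g, f)` to
within `a + b` of `k`, and both relative growth numbers are `1`.
-/

open Topology

section

variable {G : Type*} [Group G] {C : Set G}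

namespace IsNormalCone

theorem pow_mem (hC : IsNormalCone C) {f : G} (hf : f ∈ C) (n : ℕ) : f ^ n ∈ C :=
  Submonoid.pow_mem ⟨⟨C, fun hx hy => hC.2.1 _ _ hx hy⟩, hC.1⟩ hf n

theorem conj_mem (hC : IsNormalCone C) {f : G} (hf : f ∈ C) (h : G) : h * f * h⁻¹ ∈ C :=
  hC.2.2 f h hf

theorem nonneg_of_zpow_mem (hC : IsNormalCone C)
    (hanti : ∀ f g : G, ConeGe C f g → ConeGe C g f → f = g)
    {f : G} (hf : f ∈ C) (hf1 : f ≠ 1) {m : ℤ} (hm : f ^ m ∈ C) : 0 ≤ m := by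
  by_contra! hneg
  obtain ⟨n, hn⟩ : ∃ n : ℕ, -m - 1 = n := Int.eq_ofNat_of_zero_le (by omega)
  have hinv : f⁻¹ ∈ C := by
    have h := hC.2.1 _ _ hm (hC.pow_mem hf n)
    rwa [← zpow_natCast, ← hn, ← zpow_add, show m + (-m - 1) = -1 by ring, zpow_neg_one] at h
  exact hf1 (hanti f 1 (by simpa [ConeGe] using hf) (by simpa [ConeGe] using hinv))

end IsNormalCone

namespace ConeGe

theorem refl (hC : IsNormalCone C) (x : G) : ConeGe C x x := by
  simpa [ConeGe] using hC.1

theorem trans (hC : IsNormalCone C) {x y z : G} (hxy : ConeGe C x y) (hyz : ConeGe C y z) :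
    ConeGe C x z := by
  simpa [ConeGe, mul_assoc] using hC.2.1 _ _ hxy hyz

theorem mul (hC : IsNormalCone C) {x y z w : G} (hxy : ConeGe C x y) (hzw : ConeGe C z w) :
    ConeGe C (x * z) (y * w) := by
  have h := hC.2.1 _ _ hxy (hC.conj_mem hzw y)
  unfold ConeGe at h ⊢
  convert h using 1
  group

theorem zpow_iff {f : G} (p q : ℤ) : ConeGe C (f ^ p) (f ^ q) ↔ f ^ (p - q) ∈ C := by
  rw [ConeGe, zpow_sub]

end ConeGe

theorem zpow_add_coneGe_conj_zpow (hC : IsNormalCone C) {f h : G} {a b : ℤ}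
    (ha : ConeGe C (f ^ a) h⁻¹) (hb : ConeGe C (f ^ b) h) (k : ℤ) :
    ConeGe C (f ^ (k + (a + b))) ((h * f * h⁻¹) ^ k) := by
  have h1 := (hb.mul hC (ConeGe.refl hC (f ^ k))).mul hC ha
  rwa [← zpow_add, ← zpow_add, show b + k + a = k + (a + b) by ring, ← conj_zpow] at h1

theorem conj_zpow_add_coneGe_zpow (hC : IsNormalCone C) {f h : G} {a b : ℤ}
    (ha : ConeGe C (f ^ a) h⁻¹) (hb : ConeGe C (f ^ b) h) (k : ℤ) :
    ConeGe C ((h * f * h⁻¹) ^ (k + (a + b))) (f ^ k) := by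
  have h1 := ((((ConeGe.refl hC h).mul hC ha).mul hC (ConeGe.refl hC (f ^ k))).mul hC hb).mul hC
    (ConeGe.refl hC h⁻¹)
  rw [conj_zpow]
  convert h1 using 1 <;> group

theorem abs_gammaK_sub_le (hC : IsNormalCone C)
    (hanti : ∀ f g : G, ConeGe C f g → ConeGe C g f → f = g)
    {f g : G} (hf : f ∈ C) (hf1 : f ≠ 1) {c : ℤ}
    (hfg : ∀ k : ℤ, ConeGe C (f ^ (k + c)) (g ^ k))
    (hgf : ∀ k : ℤ, ConeGe C (g ^ (k + c)) (f ^ k)) (k : ℕ) :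
    |gammaK C f g k - k| ≤ c := by
  have hmem : (k : ℤ) + c ∈ {p : ℤ | ConeGe C (f ^ p) (g ^ k)} := by
    simpa only [Set.mem_ofPred_eq, zpow_natCast] using hfg k
  have hlower : ∀ p ∈ {p : ℤ | ConeGe C (f ^ p) (g ^ k)}, (k : ℤ) - c ≤ p := by
    intro p hp
    have hgk : ConeGe C (g ^ k) (f ^ ((k : ℤ) - c)) := by
      simpa only [sub_add_cancel, zpow_natCast] using hgf ((k : ℤ) - c)
    have := hC.nonneg_of_zpow_mem hanti hf hf1 ((ConeGe.zpow_iff _ _).mp (hp.trans hC hgk))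
    omega
  have := le_csInf ⟨_, hmem⟩ hlower
  have := csInf_le ⟨_, hlower⟩ hmem
  rw [gammaK, abs_le]
  constructor <;> omega

theorem tendsto_div_natCast_of_abs_sub_le {u : ℕ → ℝ} {c : ℝ} (hu : ∀ k, |u k - k| ≤ c) :
    Tendsto (fun k => u k / k) atTop (𝓝 1) := by
  have hsmall : Tendsto (fun k : ℕ => (u k - k) / k) atTop (𝓝 0) := by
    refine squeeze_zero_norm (fun k => ?_) (tendsto_const_div_atTop_nhds_zero_nat c)
    rw [norm_div, Real.norm_eq_abs, Real.norm_natCast]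
    exact div_le_div_of_nonneg_right (hu k) k.cast_nonneg
  refine Tendsto.congr' ?_ (by simpa using hsmall.const_add 1)
  filter_upwards [eventually_ne_atTop 0] with k hk
  field_simp
  ring

end

/-- If `g = h f h⁻¹` is a conjugate of the dominant `f`, then
`γ(f,g) = γ(g,f) = 1`; in particular the pseudo-distance `κ` vanishes on
conjugacy classes of dominants. -/
theorem statement10 {G : Type*} [Group G] (C : Set G) (hC : IsNormalCone C)
    (hanti : ∀ f g : G, ConeGe C f g → ConeGe C g f → f = g)
    (f h : G) (hf : IsDominant C f)
    (A B : ℝ)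
    (hA : Tendsto (fun k : ℕ => (gammaK C f (h * f * h⁻¹) k : ℝ) / (k : ℝ)) atTop (nhds A))
    (hB : Tendsto (fun k : ℕ => (gammaK C (h * f * h⁻¹) f k : ℝ) / (k : ℝ)) atTop (nhds B)) :
    A = 1 ∧ B = 1 := by
  obtain ⟨hfC, hf1, hdom⟩ := hf
  obtain ⟨a, ha⟩ := hdom h⁻¹
  obtain ⟨b, hb⟩ := hdom h
  rw [← zpow_natCast] at ha hb
  have hfg := zpow_add_coneGe_conj_zpow hC ha hb
  have hgf := conj_zpow_add_coneGe_zpow hC ha hb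
  have hgC : h * f * h⁻¹ ∈ C := hC.conj_mem hfC h
  have hg1 : h * f * h⁻¹ ≠ 1 := by simpa using hf1
  constructor
  · refine tendsto_nhds_unique hA (tendsto_div_natCast_of_abs_sub_le (c := a + b) fun k => ?_)
    exact_mod_cast abs_gammaK_sub_le hC hanti hfC hf1 hfg hgf k
  · refine tendsto_nhds_unique hB (tendsto_div_natCast_of_abs_sub_le (c := a + b) fun k => ?_)
    exact_mod_cast abs_gammaK_sub_le hC hanti hgC hg1 hgf hfg k
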